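/- arXiv:1306.3936 — 3 statements merged into one kernel-verified Lean document; each statement's English description precedes it below -/
import Mathlib

section
/- Let X be a uniformly perfect metric space carrying an (α_n)-regular structure {Q_{n,i}, x_{n,i}, r_{n,i}} with constants d, C₁, C₂, C₃(·), and assume α_n → 0 as n → ∞. Then there exists n₀ ∈ ℕ such that for all n > n₀: (1) if x ∈ X, r > 0 and n is the smallest index for which some cube Q_{n,j} is contained in B(x,r), then every cube Q_{m,i} with m ≤ n−2 and Q_{m,i} ∩ B(x,2r) ≠ ∅ satisfies 4r ≤ r_{m,i}/2; (2) B(x_{n,j}, r_{n,j}/16) ⊆ 𝔍_{n,j} for every j ∈ N_n; (3) if x ∈ Q_{n,j} and r ≤ r_{n,j}/(32 C₃(2C₁)), then B(x,2r) ∩ 𝔍_{n,i} = ∅ for all i ≠ j. -/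
open MeasureTheory Metric Set Filter

/-- A measure is doubling with constant `C`:
`0 < μ(B(x,2r)) ≤ C·μ(B(x,r)) < ∞` for all `x` and `r > 0`. -/
def IsDoublingWith {X : Type*} [MetricSpace X] [MeasurableSpace X]
    (μ : Measure X) (C : NNReal) : Prop :=
  ∀ (x : X) (r : ℝ), 0 < r →
    0 < μ (ball x (2 * r)) ∧ μ (ball x (2 * r)) ≤ (C : ENNReal) * μ (ball x r) ∧
      (C : ENNReal) * μ (ball x r) < ⊤

/-- A doubling measure: doubling with some constant `C ≥ 1`. -/
def IsDoublingMeasure {X : Type*} [MetricSpace X] [MeasurableSpace X]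
    (μ : Measure X) : Prop :=
  ∃ C : NNReal, 1 ≤ C ∧ IsDoublingWith μ C

/-- A uniformly perfect metric space. -/
def UniformlyPerfect (X : Type*) [MetricSpace X] : Prop :=
  (∃ x y : X, x ≠ y) ∧
    ∃ D : ℝ, 1 ≤ D ∧ ∀ (x : X) (r : ℝ), 0 < r →
      ((Set.univ : Set X) \ ball x r).Nonempty → (ball x r \ ball x (r / D)).Nonempty

/-- A (metrically) doubling space: there is `N` such that every ball of radius `r`
is covered by `N` balls of radius `r/2`. -/
def DoublingSpace (X : Type*) [MetricSpace X] : Prop :=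
  ∃ N : ℕ, ∀ (x : X) (r : ℝ), 0 < r →
    ∃ s : Finset X, s.card ≤ N ∧ ball x r ⊆ ⋃ y ∈ s, ball y (r / 2)

/-- Ahlfors `q`-regularity of the measure `H` with constant `C`. -/
def AhlforsRegular {X : Type*} [MetricSpace X] [MeasurableSpace X]
    (H : Measure X) (q C : ℝ) : Prop :=
  ∀ (x : X) (r : ℝ), 0 < r →
    ENNReal.ofReal (r ^ q / C) ≤ H (ball x r) ∧ H (ball x r) ≤ ENNReal.ofReal (C * r ^ q)

/-- An `(α n)`-regular structure on `X`: Borel "cubes" `Q n i` (for `i ∈ idx n`) with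
centers `ctr n i`, radii `rad n i` and constants `d, C₁, C₂, C₃(·)` satisfying
conditions (I)-(V) of Ojala's definition of `(α n)`-regular sets. -/
structure RegularStructure (X : Type*) [MetricSpace X] [MeasurableSpace X]
    (α : ℕ → ℝ) where
  idx : ℕ → Set ℕ
  Q : ℕ → ℕ → Set X
  ctr : ℕ → ℕ → X
  rad : ℕ → ℕ → ℝ
  d : ℝ
  C₁ : ℝ
  C₂ : ℝ
  C₃ : ℝ → ℝ
  d_pos : 0 < d
  d_le_one : d ≤ 1
  one_le_C₁ : 1 ≤ C₁
  one_le_C₂ : 1 ≤ C₂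
  borel : ∀ n, ∀ i ∈ idx n, MeasurableSet (Q n i)
  rad_pos : ∀ n, ∀ i ∈ idx n, 0 < rad n i
  -- (I): each level partitions the space
  cover : ∀ (n : ℕ) (x : X), ∃ i ∈ idx n, x ∈ Q n i
  pairwise_disj : ∀ n, ∀ i ∈ idx n, ∀ j ∈ idx n, i ≠ j → Q n i ∩ Q n j = ∅
  -- (II): nestedness
  nested : ∀ k m, m ≤ k → ∀ i ∈ idx k, ∀ j ∈ idx m, Q k i ∩ Q m j = ∅ ∨ Q k i ⊆ Q m j
  -- (III): cubes squeezed between balls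
  ball_subset : ∀ n, ∀ i ∈ idx n, ball (ctr n i) (rad n i) ⊆ Q n i
  subset_ball : ∀ n, ∀ i ∈ idx n, Q n i ⊆ ball (ctr n i) (C₁ * rad n i)
  -- (IV): size of the child cube containing the center
  center_lower : ∀ n, ∀ i ∈ idx n, ∀ j ∈ idx (n + 1), ctr n i ∈ Q (n + 1) j →
    (1 / C₂) * α n ^ (1 / d) * rad n i ≤ rad (n + 1) j
  center_upper : ∀ n, ∀ i ∈ idx n, ∀ j ∈ idx (n + 1), ctr n i ∈ Q (n + 1) j →
    rad (n + 1) j ≤ C₂ * α n ^ d * rad n i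
  center_proper : ∀ n, ∀ i ∈ idx n, ∀ j ∈ idx (n + 1), ctr n i ∈ Q (n + 1) j →
    (Q n i \ Q (n + 1) j).Nonempty
  -- (V): comparability of radii of nearby cubes of the same level
  one_le_C₃ : ∀ T : ℝ, 1 < T → 1 ≤ C₃ T
  comparable : ∀ T : ℝ, 1 < T → ∀ n, ∀ i ∈ idx n, ∀ j ∈ idx n,
    (Q n i ∩ ball (ctr n j) (T * rad n j)).Nonempty →
    (1 / C₃ T) * rad n j ≤ rad n i ∧ rad n i ≤ C₃ T * rad n j

namespace RegularStructure

variable {X : Type*} [MetricSpace X] [MeasurableSpace X] {α : ℕ → ℝ}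

open scoped Classical

/-- `E_n`: the union over `i ∈ N_n` of `Q_{n,i} ∖ Q_{n+1,j(i)}` where `j(i)` is the
index of the `(n+1)`-cube containing the center `x_{n,i}`. -/
def level (S : RegularStructure X α) (n : ℕ) : Set X :=
  {x | ∃ i ∈ S.idx n, ∃ j ∈ S.idx (n + 1),
    S.ctr n i ∈ S.Q (n + 1) j ∧ x ∈ S.Q n i \ S.Q (n + 1) j}

/-- The `(α n)`-regular set `E = ⋂ n, E_n` determined by the structure. -/
def limitSet (S : RegularStructure X α) : Set X := ⋂ n, S.level n

/-- `⋂_{i=1}^{n-1} E_i`. -/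
def preLevel (S : RegularStructure X α) (n : ℕ) : Set X :=
  ⋂ i ∈ Finset.Icc 1 (n - 1), S.level i

/-- `𝔍_{n,j}`: the union of the `(n+1)`-cubes contained in `B(x_{n,j}, r_{n,j}/2)`. -/
def Jset (S : RegularStructure X α) (n j : ℕ) : Set X :=
  {x | ∃ i ∈ S.idx (n + 1),
    S.Q (n + 1) i ⊆ ball (S.ctr n j) (S.rad n j / 2) ∧ x ∈ S.Q (n + 1) i}

/-- `IN(B(x,r),n)`: the union of the `n`-cubes contained in `B(x,r)`. -/
def INset (S : RegularStructure X α) (x : X) (r : ℝ) (n : ℕ) : Set X :=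
  {y | ∃ j ∈ S.idx n, S.Q n j ⊆ ball x r ∧ y ∈ S.Q n j}

/-- `COV(B(x,r),n)`: the union of the `n`-cubes meeting `B(x,r)`. -/
def COVset (S : RegularStructure X α) (x : X) (r : ℝ) (n : ℕ) : Set X :=
  {y | ∃ j ∈ S.idx n, (S.Q n j ∩ ball x r).Nonempty ∧ y ∈ S.Q n j}

/-- The normalizing constant `A_{n,j} = H(𝔍_{n,j}) / ∫_{𝔍_{n,j}} d(x_{n,j},y)^ρ dH(y)`. -/
noncomputable def Acoef (S : RegularStructure X α) (H : Measure X) (ρ : ℝ) (n j : ℕ) : ℝ :=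
  (H (S.Jset n j)).toReal / ∫ y in S.Jset n j, dist (S.ctr n j) y ^ ρ ∂H

/-- The weight `y_n`: equal to `A_{n,j} d(x_{n,j},x)^ρ` on `𝔍_{n,j}` and `1` elsewhere. -/
noncomputable def weight (S : RegularStructure X α) (H : Measure X) (ρ : ℝ) (n : ℕ)
    (x : X) : ℝ :=
  if h : ∃ j ∈ S.idx n, x ∈ S.Jset n j then
    S.Acoef H ρ n h.choose * dist (S.ctr n h.choose) x ^ ρ
  else 1

/-- The measure `θ_n` with `dθ_n = y_n dH`. -/
noncomputable def theta (S : RegularStructure X α) (H : Measure X) (ρ : ℝ) (n : ℕ) :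
    Measure X :=
  H.withDensity fun x => ENNReal.ofReal (S.weight H ρ n x)

/-- The averaged weight `t_n`: on each `(n+1)`-cube `Q`, equal to `θ_n(Q)/H(Q)`. -/
noncomputable def avgWeight (S : RegularStructure X α) (H : Measure X) (ρ : ℝ) (n : ℕ)
    (x : X) : ℝ :=
  if h : ∃ i ∈ S.idx (n + 1), x ∈ S.Q (n + 1) i then
    (S.theta H ρ n (S.Q (n + 1) h.choose)).toReal / (H (S.Q (n + 1) h.choose)).toReal
  else 1

/-- `K_n = ∏_{i=n₀}^{n} t_i`. -/
noncomputable def Kweight (S : RegularStructure X α) (H : Measure X) (ρ : ℝ)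
    (n₀ n : ℕ) (x : X) : ℝ :=
  ∏ i ∈ Finset.Icc n₀ n, S.avgWeight H ρ i x

/-- The measure `ν_n` with `dν_n = K_n dH`. -/
noncomputable def nu (S : RegularStructure X α) (H : Measure X) (ρ : ℝ) (n₀ n : ℕ) :
    Measure X :=
  H.withDensity fun x => ENNReal.ofReal (S.Kweight H ρ n₀ n x)

/-- A level `n` is good if `B(x_{n,j}, r_{n,j}/16) ⊆ 𝔍_{n,j}` for all `j`, and balls
`B(x,2r)` with `x ∈ Q_{n,j}`, `r ≤ r_{n,j}/(32 C₃(2C₁))` miss all `𝔍_{n,i}`, `i ≠ j`. -/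
def GoodLevel (S : RegularStructure X α) (n : ℕ) : Prop :=
  (∀ j ∈ S.idx n, ball (S.ctr n j) (S.rad n j / 16) ⊆ S.Jset n j) ∧
  (∀ j ∈ S.idx n, ∀ x ∈ S.Q n j, ∀ r : ℝ, 0 < r →
    r ≤ S.rad n j / (32 * S.C₃ (2 * S.C₁)) →
    ∀ i ∈ S.idx n, i ≠ j → ball x (2 * r) ∩ S.Jset n i = ∅)

/-- Relative plumpness of the `(α n)`-regular set determined by the structure. -/
def RelativelyPlump (S : RegularStructure X α) : Prop :=
  ∃ b : ℝ, 0 < b ∧ ∀ x ∈ S.limitSet, ∀ R : ℝ, 0 < R → ∀ n : ℕ,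
    (∃ j ∈ S.idx n, S.Q n j ⊆ ball x R ∩ S.preLevel n) →
    (∀ m, m < n → ¬ ∃ j ∈ S.idx m, S.Q m j ⊆ ball x R ∩ S.preLevel m) →
    ∃ y ∈ S.preLevel n, ball y (b * R) ⊆ ball x R ∩ S.preLevel n

end RegularStructure

/-- `E ⊆ X` is an `(α n)`-regular set. -/
def IsRegularSet {X : Type*} [MetricSpace X] [MeasurableSpace X]
    (α : ℕ → ℝ) (E : Set X) : Prop :=
  ∃ S : RegularStructure X α, E = S.limitSet


section AuxGood

variable {X : Type*} [MetricSpace X] [MeasurableSpace X] {α : ℕ → ℝ}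

lemma RegularStructure.ctr_mem_Q (S : RegularStructure X α) (n i : ℕ) (hi : i ∈ S.idx n) :
    S.ctr n i ∈ S.Q n i :=
  S.ball_subset n i hi (Metric.mem_ball_self (S.rad_pos n i hi))

lemma RegularStructure.Q_ne_univ (S : RegularStructure X α) (k i : ℕ)
    (hi : i ∈ S.idx (k + 1)) : S.Q (k + 1) i ≠ Set.univ := by
  intro h
  obtain ⟨j, hj, hcj⟩ := S.cover k (S.ctr (k + 1) i)
  obtain ⟨j', hj', hcj'⟩ := S.cover (k + 1) (S.ctr k j)
  have hji : j' = i := by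
    by_contra hne
    have hdisj := S.pairwise_disj (k + 1) j' hj' i hi hne
    have hmem : S.ctr k j ∈ S.Q (k + 1) j' ∩ S.Q (k + 1) i := ⟨hcj', by rw [h]; trivial⟩
    rw [hdisj] at hmem
    exact hmem
  obtain ⟨w, hw⟩ := S.center_proper k j hj j' hj' hcj'
  rw [hji, h] at hw
  exact hw.2 trivial

/-- Parent-child radius comparison from uniform perfectness. -/
lemma RegularStructure.child_le (S : RegularStructure X α) (D : ℝ) (hD : 1 ≤ D)
    (hDup : ∀ (x : X) (r : ℝ), 0 < r → ((Set.univ : Set X) \ ball x r).Nonempty →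
      (ball x r \ ball x (r / D)).Nonempty)
    (k i j : ℕ) (hi : i ∈ S.idx (k + 1)) (hj : j ∈ S.idx k)
    (hsub : S.Q (k + 1) i ⊆ S.Q k j) :
    S.rad (k + 1) i ≤ 2 * D * S.C₁ * S.rad k j := by
  have hDpos : (0:ℝ) < D := by linarith
  have hri := S.rad_pos (k + 1) i hi
  have hrj := S.rad_pos k j hj
  have hC₁ := S.one_le_C₁
  -- the complement of the inner ball is nonempty
  obtain ⟨y, hy⟩ := Set.ne_univ_iff_exists_notMem _ |>.1 (S.Q_ne_univ k i hi)
  have hcompl : ((Set.univ : Set X) \ ball (S.ctr (k + 1) i) (S.rad (k + 1) i)).Nonempty :=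
    ⟨y, Set.mem_univ _, fun hmem => hy (S.ball_subset (k + 1) i hi hmem)⟩
  obtain ⟨w, hw1, hw2⟩ := hDup _ _ hri hcompl
  have hwd : S.rad (k + 1) i / D ≤ dist w (S.ctr (k + 1) i) := by
    by_contra hlt
    exact hw2 (Metric.mem_ball.2 (lt_of_not_ge hlt))
  have hwQ : w ∈ S.Q k j := hsub (S.ball_subset (k + 1) i hi hw1)
  have hcQ : S.ctr (k + 1) i ∈ S.Q k j := hsub (S.ctr_mem_Q (k + 1) i hi)
  have h1 : dist w (S.ctr k j) < S.C₁ * S.rad k j := Metric.mem_ball.1 (S.subset_ball k j hj hwQ)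
  have h2 : dist (S.ctr (k + 1) i) (S.ctr k j) < S.C₁ * S.rad k j :=
    Metric.mem_ball.1 (S.subset_ball k j hj hcQ)
  have h3 : dist w (S.ctr (k + 1) i) ≤ dist w (S.ctr k j) + dist (S.ctr k j) (S.ctr (k + 1) i) :=
    dist_triangle _ _ _
  rw [dist_comm (S.ctr k j)] at h3
  have h4 : S.rad (k + 1) i / D < 2 * S.C₁ * S.rad k j := by linarith
  have h5 : S.rad (k + 1) i < D * (2 * S.C₁ * S.rad k j) := by
    rw [div_lt_iff₀ hDpos] at h4
    linarith [h4, mul_comm (2 * S.C₁ * S.rad k j) D]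
  nlinarith
/-- Children of a cube at a fine enough level are much smaller than the cube. -/
lemma RegularStructure.child_small (S : RegularStructure X α) (hα : ∀ n, 0 < α n ∧ α n < 1)
    (ε : ℝ) (hε : 0 < ε) (hε1 : ε ≤ 1) (k : ℕ)
    (hk : S.C₂ * α k ^ S.d * S.C₃ (2 * S.C₁ / ε + 1) < ε)
    (j : ℕ) (hj : j ∈ S.idx k) (i : ℕ) (hi : i ∈ S.idx (k + 1))
    (hmem : S.ctr (k + 1) i ∈ S.Q k j) :
    S.rad (k + 1) i ≤ ε * S.rad k j := by
  have hC₁ := S.one_le_C₁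
  have hC₂ := S.one_le_C₂
  have hrj := S.rad_pos k j hj
  have hri := S.rad_pos (k + 1) i hi
  have hαk := (hα k).1
  have hαd : 0 < α k ^ S.d := Real.rpow_pos_of_pos hαk _
  have hT : (1:ℝ) < 2 * S.C₁ / ε + 1 := by
    have : 0 < 2 * S.C₁ / ε := by positivity
    linarith
  have hC₃ : 1 ≤ S.C₃ (2 * S.C₁ / ε + 1) := S.one_le_C₃ _ hT
  have hα1 : S.C₂ * α k ^ S.d ≤ 1 := by nlinarith
  by_contra hcon
  push_neg at hcon
  obtain ⟨j', hj', hcj'⟩ := S.cover (k + 1) (S.ctr k j)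
  have hupper : S.rad (k + 1) j' ≤ S.C₂ * α k ^ S.d * S.rad k j :=
    S.center_upper k j hj j' hj' hcj'
  have h1 : dist (S.ctr (k + 1) j') (S.ctr k j) < S.C₁ * S.rad (k + 1) j' := by
    have := S.subset_ball (k + 1) j' hj' hcj'
    rw [Metric.mem_ball] at this
    rw [dist_comm]; exact this
  have h2 : dist (S.ctr k j) (S.ctr (k + 1) i) < S.C₁ * S.rad k j := by
    have := S.subset_ball k j hj hmem
    rw [Metric.mem_ball] at this
    rw [dist_comm]; exact this
  have hrj'pos := S.rad_pos (k + 1) j' hj'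
  have ha : S.rad (k + 1) j' ≤ S.rad k j := le_trans hupper (by nlinarith)
  have hb : S.C₁ * S.rad (k + 1) j' ≤ S.C₁ * S.rad k j :=
    mul_le_mul_of_nonneg_left ha (by linarith)
  have h3 : dist (S.ctr (k + 1) j') (S.ctr (k + 1) i) < 2 * S.C₁ * S.rad k j := by
    have := dist_triangle (S.ctr (k + 1) j') (S.ctr k j) (S.ctr (k + 1) i)
    linarith
  have h4 : 2 * S.C₁ * S.rad k j < (2 * S.C₁ / ε + 1) * S.rad (k + 1) i := by
    have : 2 * S.C₁ / ε * (ε * S.rad k j) = 2 * S.C₁ * S.rad k j := by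
      field_simp
    nlinarith [div_pos (by linarith : (0:ℝ) < 2 * S.C₁) hε]
  have hne : (S.Q (k + 1) j' ∩ ball (S.ctr (k + 1) i)
      ((2 * S.C₁ / ε + 1) * S.rad (k + 1) i)).Nonempty :=
    ⟨S.ctr (k + 1) j', S.ctr_mem_Q (k + 1) j' hj', Metric.mem_ball.2 (by linarith)⟩
  obtain ⟨hlow, -⟩ := S.comparable _ hT (k + 1) j' hj' i hi hne
  -- hlow : 1 / C₃ T * rad (k+1) i ≤ rad (k+1) j'
  have hC₃pos : (0:ℝ) < S.C₃ (2 * S.C₁ / ε + 1) := by linarith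
  have h5 : S.rad (k + 1) i ≤ S.C₃ (2 * S.C₁ / ε + 1) * (S.C₂ * α k ^ S.d * S.rad k j) := by
    have := mul_le_mul_of_nonneg_left (le_trans hlow hupper) (le_of_lt hC₃pos)
    calc S.rad (k + 1) i = S.C₃ (2 * S.C₁ / ε + 1) * (1 / S.C₃ (2 * S.C₁ / ε + 1)
          * S.rad (k + 1) i) := by
            rw [one_div, mul_inv_cancel_left₀ (ne_of_gt hC₃pos)]
      _ ≤ S.C₃ (2 * S.C₁ / ε + 1) * (S.C₂ * α k ^ S.d * S.rad k j) := this
  nlinarith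

end AuxGood


set_option maxHeartbeats 1000000 in
/-- Lemma 4.1 of the paper: existence of the starting level `n₀`. -/
theorem exists_good_starting_level {X : Type*} [MetricSpace X] [MeasurableSpace X]
    (hup : UniformlyPerfect X)
    (α : ℕ → ℝ) (hα : ∀ n, 0 < α n ∧ α n < 1)
    (hlim : Tendsto α atTop (nhds 0))
    (S : RegularStructure X α) :
    ∃ n₀ : ℕ, ∀ n, n₀ < n →
      ((∀ (x : X) (r : ℝ), 0 < r →
          (∃ j ∈ S.idx n, S.Q n j ⊆ ball x r) →
          (∀ m, m < n → ¬ ∃ j ∈ S.idx m, S.Q m j ⊆ ball x r) →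
          ∀ m, m + 2 ≤ n → ∀ i ∈ S.idx m,
            (S.Q m i ∩ ball x (2 * r)).Nonempty → 4 * r ≤ S.rad m i / 2) ∧
        (∀ j ∈ S.idx n, ball (S.ctr n j) (S.rad n j / 16) ⊆ S.Jset n j) ∧
        (∀ j ∈ S.idx n, ∀ x ∈ S.Q n j, ∀ r : ℝ, 0 < r →
          r ≤ S.rad n j / (32 * S.C₃ (2 * S.C₁)) →
          ∀ i ∈ S.idx n, i ≠ j → ball x (2 * r) ∩ S.Jset n i = ∅)) := by
  classical
  obtain ⟨-, D, hD, hDup⟩ := hup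
  have hC₁ := S.one_le_C₁
  have hC₂ := S.one_le_C₂
  have hC₁pos : (0:ℝ) < S.C₁ := by linarith
  set K : ℝ := 8 * S.C₃ (S.C₁ + 2) with hKdef
  have hKC₃ : 1 ≤ S.C₃ (S.C₁ + 2) := S.one_le_C₃ _ (by linarith)
  have hC₃'pos : (0:ℝ) < S.C₃ (S.C₁ + 2) := by linarith
  have hK8 : 8 ≤ K := by rw [hKdef]; nlinarith
  have hKpos : (0:ℝ) < K := by linarith
  set ε : ℝ := 1 / (8 * S.C₁ * K) with hεdef
  have hεpos : 0 < ε := by rw [hεdef]; positivity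
  have hεK : ε * (8 * S.C₁ * K) = 1 := by
    rw [hεdef]; field_simp
  have hε1 : ε ≤ 1 := by
    rw [hεdef, div_le_one (by positivity)]
    nlinarith
  set T : ℝ := 2 * S.C₁ / ε + 1 with hTdef
  have hT1 : (1:ℝ) < T := by
    have : 0 < 2 * S.C₁ / ε := by positivity
    rw [hTdef]; linarith
  have hC₃T : 1 ≤ S.C₃ T := S.one_le_C₃ _ hT1
  have hC₃Tpos : (0:ℝ) < S.C₃ T := by linarith
  -- choose N from the convergence of α
  set δ : ℝ := min (ε / (S.C₂ * S.C₃ T)) 1 with hδdef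
  have hδpos : 0 < δ := by
    apply lt_min _ one_pos
    positivity
  have hδ'pos : 0 < δ ^ (1 / S.d) := Real.rpow_pos_of_pos hδpos _
  obtain ⟨N, hN⟩ := Filter.eventually_atTop.1 (hlim.eventually (gt_mem_nhds hδ'pos))
  have hNcond : ∀ k, N ≤ k → S.C₂ * α k ^ S.d * S.C₃ (2 * S.C₁ / ε + 1) < ε := by
    intro k hk
    have h1 : α k < δ ^ (1 / S.d) := hN k hk
    have h2 : α k ^ S.d < δ := by
      have h3 := Real.rpow_lt_rpow (le_of_lt (hα k).1) h1 S.d_pos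
      rwa [← Real.rpow_mul (le_of_lt hδpos), one_div_mul_cancel (ne_of_gt S.d_pos),
        Real.rpow_one] at h3
    have hδle : δ ≤ ε / (S.C₂ * S.C₃ T) := min_le_left _ _
    have hαd : 0 < α k ^ S.d := Real.rpow_pos_of_pos (hα k).1 _
    have h4 : α k ^ S.d < ε / (S.C₂ * S.C₃ T) := lt_of_lt_of_le h2 hδle
    have h5 : α k ^ S.d * (S.C₂ * S.C₃ T) < ε := by
      rw [div_eq_mul_inv] at h4
      have hpos : (0:ℝ) < S.C₂ * S.C₃ T := by positivity
      calc α k ^ S.d * (S.C₂ * S.C₃ T) < ε * (S.C₂ * S.C₃ T)⁻¹ * (S.C₂ * S.C₃ T) := by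
            exact mul_lt_mul_of_pos_right h4 hpos
        _ = ε := by field_simp
    rw [← hTdef]; nlinarith
  -- the constant L and the exponent M
  set L : ℝ := 2 * D * S.C₁ with hLdef
  have hL1 : 1 ≤ L := by rw [hLdef]; nlinarith
  have hLpos : (0:ℝ) < L := by linarith
  have hεinv : 1 / ε = 8 * S.C₁ * K := by
    rw [hεdef, one_div_one_div]
  have h1ε : (1:ℝ) ≤ 1 / ε := by rw [hεinv]; nlinarith
  obtain ⟨M, hM⟩ := pow_unbounded_of_one_lt (2 * S.C₁ * K * L ^ N)
    (show (1:ℝ) < 1 / ε by rw [hεinv]; nlinarith)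
  refine ⟨N + M + 1, fun n hn => ⟨?_, ?_, ?_⟩⟩
  · -- Part (1)
    intro x r hr _hex hmin m hm i hi hmeet
    choose p hp1 hp2 using fun k => S.cover k x
    have hchain : ∀ k, S.Q (k + 1) (p (k + 1)) ⊆ S.Q k (p k) := by
      intro k
      rcases S.nested (k + 1) k (Nat.le_succ k) (p (k + 1)) (hp1 _) (p k) (hp1 _) with h | h
      · exfalso
        have hx : x ∈ S.Q (k + 1) (p (k + 1)) ∩ S.Q k (p k) := ⟨hp2 _, hp2 _⟩
        rw [h] at hx
        exact hx
      · exact h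
    have hbase : ∀ m', m' + 1 ≤ n → r / (2 * S.C₁) ≤ S.rad m' (p m') := by
      intro m' hm'
      have hnot : ¬ S.Q m' (p m') ⊆ ball x r :=
        fun hsub => hmin m' (by omega) ⟨p m', hp1 m', hsub⟩
      obtain ⟨w, hw, hwout⟩ := Set.not_subset.1 hnot
      have hdx : dist x (S.ctr m' (p m')) < S.C₁ * S.rad m' (p m') :=
        Metric.mem_ball.1 (S.subset_ball _ _ (hp1 m') (hp2 m'))
      have hdw : dist w (S.ctr m' (p m')) < S.C₁ * S.rad m' (p m') :=
        Metric.mem_ball.1 (S.subset_ball _ _ (hp1 m') hw)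
      have hrw : r ≤ dist x w := by
        by_contra hlt
        exact hwout (Metric.mem_ball.2 (by rw [dist_comm]; exact lt_of_not_ge hlt))
      have htri : dist x w ≤ dist x (S.ctr m' (p m')) + dist (S.ctr m' (p m')) w :=
        dist_triangle _ _ _
      rw [dist_comm (S.ctr m' (p m')) w] at htri
      rw [div_le_iff₀ (by positivity)]
      nlinarith
    have hG : ∀ t m', N ≤ m' → m' + t + 1 = n →
        (1 / ε) ^ t * (r / (2 * S.C₁)) ≤ S.rad m' (p m') := by
      intro t
      induction t with
      | zero =>
        intro m' _ hm2
        simpa using hbase m' (by omega)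
      | succ t ih =>
        intro m' hm1 hm2
        have ih' := ih (m' + 1) (by omega) (by omega)
        have hctr : S.ctr (m' + 1) (p (m' + 1)) ∈ S.Q m' (p m') :=
          hchain m' (S.ctr_mem_Q _ _ (hp1 _))
        have hsm : S.rad (m' + 1) (p (m' + 1)) ≤ ε * S.rad m' (p m') :=
          S.child_small hα ε hεpos hε1 m' (hNcond m' hm1) (p m') (hp1 _) (p (m' + 1))
            (hp1 _) hctr
        have step : 1 / ε * S.rad (m' + 1) (p (m' + 1)) ≤ S.rad m' (p m') := by
          rw [div_mul_eq_mul_div, one_mul, div_le_iff₀ hεpos, mul_comm]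
          exact hsm
        calc (1 / ε) ^ (t + 1) * (r / (2 * S.C₁))
            = 1 / ε * ((1 / ε) ^ t * (r / (2 * S.C₁))) := by ring
          _ ≤ 1 / ε * S.rad (m' + 1) (p (m' + 1)) :=
              mul_le_mul_of_nonneg_left ih' (by positivity)
          _ ≤ S.rad m' (p m') := step
    have hH : ∀ s m', m' + s = N → S.rad N (p N) ≤ L ^ s * S.rad m' (p m') := by
      intro s
      induction s with
      | zero =>
        intro m' hm'
        have : m' = N := by omega
        subst this; simp
      | succ s ih =>
        intro m' hm'
        have ih' := ih (m' + 1) (by omega)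
        have hstep : S.rad (m' + 1) (p (m' + 1)) ≤ L * S.rad m' (p m') :=
          S.child_le D hD hDup m' _ _ (hp1 _) (hp1 _) (hchain m')
        calc S.rad N (p N) ≤ L ^ s * S.rad (m' + 1) (p (m' + 1)) := ih'
          _ ≤ L ^ s * (L * S.rad m' (p m')) :=
              mul_le_mul_of_nonneg_left hstep (pow_nonneg (le_of_lt hLpos) _)
          _ = L ^ (s + 1) * S.rad m' (p m') := by ring
    have hKr : K * r ≤ S.rad m (p m) := by
      have hA : (0:ℝ) < r / (2 * S.C₁) := by positivity
      rcases le_or_gt N m with hNm | hNm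
      · have hGm := hG (n - m - 1) m hNm (by omega)
        have ht1 : 1 ≤ n - m - 1 := by omega
        have hp1ε : (1 / ε) ^ 1 ≤ (1 / ε) ^ (n - m - 1) := pow_le_pow_right₀ h1ε ht1
        have h6 : 1 / ε * (r / (2 * S.C₁)) ≤ (1 / ε) ^ (n - m - 1) * (r / (2 * S.C₁)) := by
          have := mul_le_mul_of_nonneg_right hp1ε (le_of_lt hA)
          simpa using this
        have h7 : 1 / ε * (r / (2 * S.C₁)) = 4 * K * r := by
          rw [hεinv]; field_simp; ring
        nlinarith
      · have hGN := hG (n - N - 1) N le_rfl (by omega)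
        have hMle : M ≤ n - N - 1 := by omega
        have hpow : (1 / ε) ^ M ≤ (1 / ε) ^ (n - N - 1) := pow_le_pow_right₀ h1ε hMle
        have h6 : 2 * S.C₁ * K * L ^ N * (r / (2 * S.C₁)) ≤ S.rad N (p N) := by
          calc 2 * S.C₁ * K * L ^ N * (r / (2 * S.C₁))
              ≤ (1 / ε) ^ M * (r / (2 * S.C₁)) :=
                mul_le_mul_of_nonneg_right (le_of_lt hM) (le_of_lt hA)
            _ ≤ (1 / ε) ^ (n - N - 1) * (r / (2 * S.C₁)) :=
                mul_le_mul_of_nonneg_right hpow (le_of_lt hA)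
            _ ≤ S.rad N (p N) := hGN
        have h7 : 2 * S.C₁ * K * L ^ N * (r / (2 * S.C₁)) = K * L ^ N * r := by
          field_simp
        rw [h7] at h6
        have hHm := hH (N - m) m (by omega)
        have hLm : L ^ (N - m) ≤ L ^ N := pow_le_pow_right₀ hL1 (by omega)
        have hLmpos : (0:ℝ) < L ^ (N - m) := pow_pos hLpos _
        have h8 : L ^ (N - m) * (K * r) ≤ L ^ (N - m) * S.rad m (p m) := by
          calc L ^ (N - m) * (K * r) ≤ L ^ N * (K * r) :=
                mul_le_mul_of_nonneg_right hLm (by positivity)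
            _ = K * L ^ N * r := by ring
            _ ≤ S.rad N (p N) := h6
            _ ≤ L ^ (N - m) * S.rad m (p m) := hHm
        exact le_of_mul_le_mul_left h8 hLmpos
    -- conclude part (1)
    obtain ⟨z, hz1, hz2⟩ := hmeet
    have hrm := S.rad_pos m (p m) (hp1 m)
    have hzx : dist z x < 2 * r := Metric.mem_ball.1 hz2
    have hxc : dist x (S.ctr m (p m)) < S.C₁ * S.rad m (p m) :=
      Metric.mem_ball.1 (S.subset_ball _ _ (hp1 m) (hp2 m))
    have hdz : dist z (S.ctr m (p m)) < (S.C₁ + 2) * S.rad m (p m) := by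
      have htri := dist_triangle z x (S.ctr m (p m))
      nlinarith
    obtain ⟨hlow, -⟩ := S.comparable (S.C₁ + 2) (by linarith) m i hi (p m) (hp1 m)
      ⟨z, hz1, Metric.mem_ball.2 hdz⟩
    have h8r : 8 * r ≤ S.rad m i := by
      have h9 : 1 / S.C₃ (S.C₁ + 2) * (K * r) ≤ 1 / S.C₃ (S.C₁ + 2) * S.rad m (p m) :=
        mul_le_mul_of_nonneg_left hKr (by positivity)
      have h10 : 1 / S.C₃ (S.C₁ + 2) * (K * r) = 8 * r := by
        rw [hKdef]; field_simp
      linarith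
    linarith
  · -- Part (2)
    intro j hj y hy
    have hn' : N ≤ n := by omega
    obtain ⟨i, hi, hyi⟩ := S.cover (n + 1) y
    have hrj := S.rad_pos n j hj
    have hyb : dist y (S.ctr n j) < S.rad n j / 16 := Metric.mem_ball.1 hy
    have hyQ : y ∈ S.Q n j := S.ball_subset n j hj (Metric.mem_ball.2 (by linarith))
    have hsub : S.Q (n + 1) i ⊆ S.Q n j := by
      rcases S.nested (n + 1) n (Nat.le_succ n) i hi j hj with h | h
      · exfalso
        have hx : y ∈ S.Q (n + 1) i ∩ S.Q n j := ⟨hyi, hyQ⟩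
        rw [h] at hx
        exact hx
      · exact h
    have hctr : S.ctr (n + 1) i ∈ S.Q n j := hsub (S.ctr_mem_Q (n + 1) i hi)
    have hsmall : S.rad (n + 1) i ≤ ε * S.rad n j :=
      S.child_small hα ε hεpos hε1 n (hNcond n hn') j hj i hi hctr
    have hC₁ε : S.C₁ * ε ≤ 1 / 8 := by
      have : S.C₁ * ε * (8 * K) = 1 := by
        calc S.C₁ * ε * (8 * K) = ε * (8 * S.C₁ * K) := by ring
          _ = 1 := hεK
      nlinarith
    refine ⟨i, hi, ?_, hyi⟩
    intro z hz
    have h1 : dist z (S.ctr (n + 1) i) < S.C₁ * S.rad (n + 1) i := by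
      have := S.subset_ball (n + 1) i hi hz
      rwa [Metric.mem_ball] at this
    have h2 : dist (S.ctr (n + 1) i) y < S.C₁ * S.rad (n + 1) i := by
      have := S.subset_ball (n + 1) i hi hyi
      rw [Metric.mem_ball] at this
      rw [dist_comm]; exact this
    have hri := S.rad_pos (n + 1) i hi
    have hcb : S.C₁ * S.rad (n + 1) i ≤ S.C₁ * ε * S.rad n j := by nlinarith
    rw [Metric.mem_ball]
    calc dist z (S.ctr n j) ≤ dist z (S.ctr (n + 1) i) + dist (S.ctr (n + 1) i) y
          + dist y (S.ctr n j) := dist_triangle4 _ _ _ _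
      _ < S.C₁ * ε * S.rad n j + S.C₁ * ε * S.rad n j + S.rad n j / 16 := by linarith
      _ ≤ S.rad n j / 8 + S.rad n j / 8 + S.rad n j / 16 := by nlinarith
      _ < S.rad n j / 2 := by linarith
  · -- Part (3)
    intro j hj x hx r hr hrle i hi hij
    have h2C₁ : (1:ℝ) < 2 * S.C₁ := by linarith
    have hC₃2 : 1 ≤ S.C₃ (2 * S.C₁) := S.one_le_C₃ _ h2C₁
    have hC₃2pos : (0:ℝ) < S.C₃ (2 * S.C₁) := by linarith
    have hrj := S.rad_pos n j hj
    have hri := S.rad_pos n i hi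
    rw [Set.eq_empty_iff_forall_notMem]
    rintro z ⟨hz1, hz2⟩
    obtain ⟨k, hk, hksub, hzk⟩ := hz2
    have hzc : dist z (S.ctr n i) < S.rad n i / 2 := Metric.mem_ball.1 (hksub hzk)
    have hzQ : z ∈ S.Q n i := S.ball_subset n i hi (Metric.mem_ball.2 (by linarith))
    have hxc : dist x (S.ctr n j) < S.C₁ * S.rad n j :=
      Metric.mem_ball.1 (S.subset_ball n j hj hx)
    have hzx : dist z x < 2 * r := Metric.mem_ball.1 hz1
    have hrle' : r * (32 * S.C₃ (2 * S.C₁)) ≤ S.rad n j := by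
      rw [← le_div_iff₀ (by positivity)]
      exact hrle
    have h32r : 32 * r ≤ S.rad n j := by nlinarith
    have hmeet : (S.Q n i ∩ ball (S.ctr n j) (2 * S.C₁ * S.rad n j)).Nonempty := by
      refine ⟨z, hzQ, Metric.mem_ball.2 ?_⟩
      have htri := dist_triangle z x (S.ctr n j)
      nlinarith
    obtain ⟨hlow, -⟩ := S.comparable (2 * S.C₁) h2C₁ n i hi j hj hmeet
    -- hlow : 1 / C₃(2C₁) * rad n j ≤ rad n i
    have hji : S.rad n j ≤ S.C₃ (2 * S.C₁) * S.rad n i := by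
      have := mul_le_mul_of_nonneg_left hlow (le_of_lt hC₃2pos)
      calc S.rad n j
          = S.C₃ (2 * S.C₁) * (1 / S.C₃ (2 * S.C₁) * S.rad n j) := by
            rw [one_div, mul_inv_cancel_left₀ (ne_of_gt hC₃2pos)]
        _ ≤ S.C₃ (2 * S.C₁) * S.rad n i := this
    have hxi : dist x (S.ctr n i) < S.rad n i := by
      have htri := dist_triangle x z (S.ctr n i)
      rw [dist_comm x z] at htri
      nlinarith
    have hxQ : x ∈ S.Q n i := S.ball_subset n i hi (Metric.mem_ball.2 hxi)
    have hdisj := S.pairwise_disj n i hi j hj hij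
    have : x ∈ S.Q n i ∩ S.Q n j := ⟨hxQ, hx⟩
    rw [hdisj] at this
    exact this
end

section
/- Let X be a uniformly perfect metric space carrying an (α_n)-regular structure {Q_{n,i}, x_{n,i}, r_{n,i}}, and let μ be a doubling measure on X. Then there exists a constant C_μ ≥ 1, depending only on the doubling constant of μ and the structure constants, such that whenever IN(B(x,r),n) ≠ ∅, one has (1/C_μ) μ(COV(B(x,2r),n)) ≤ μ(B(x,r)) ≤ C_μ μ(IN(B(x,r),n)). -/
/-!
Fix an `n`-cube `Q_{n,j} ⊆ B(x,r)`. By (V), two `n`-cubes containing points at distance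
`< T r_{n,i}` have comparable radii. If `B(x,r) ≠ X`, uniform perfectness gives `r_{n,j} ≲ r`,
hence every `n`-cube meeting `B(x,2r)` has radius `≲ r` and `COV(B(x,2r),n)` lies in a ball
`B(x, K r)`. For `IN`: either every `n`-cube meeting `B(x,r/2)` lies in `B(x,r)`, and then
`B(x,r/2) ⊆ IN(B(x,r),n)`; or one of them sticks out of `B(x,r)`, so its radius is `≳ r`, and by
(V) `r ≲ r_{n,j}`, so that `B(x,r) ⊆ B(x_{n,j}, K r_{n,j})` with `B(x_{n,j}, r_{n,j}) ⊆ IN`.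
Iterated doubling compares the measures of these concentric balls.
-/

open MeasureTheory Metric Set Filter

def UniformlyPerfectWith (X : Type*) [MetricSpace X] (D : ℝ) : Prop :=
  ∀ (x : X) (r : ℝ), 0 < r →
    ((Set.univ : Set X) \ ball x r).Nonempty → (ball x r \ ball x (r / D)).Nonempty

lemma UniformlyPerfectWith.radius_le_of_ball_subset {X : Type*} [MetricSpace X] {D : ℝ}
    (h : UniformlyPerfectWith X D) (hD : 0 < D) {x y : X} {r s : ℝ} (hs : 0 < s)
    (hsub : ball y s ⊆ ball x r) (hne : (ball x r)ᶜ.Nonempty) : s ≤ 2 * D * r := by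
  obtain ⟨z, hz⟩ := hne
  obtain ⟨w, hw, hw'⟩ := h y s hs ⟨z, mem_univ z, fun hzy => hz (hsub hzy)⟩
  have hyx : dist y x < r := hsub (mem_ball_self hs)
  have hwx : dist w x < r := hsub hw
  have hsw : s / D ≤ dist w y := not_lt.mp hw'
  have hwy : dist w y < 2 * r := by
    linarith [dist_triangle w x y, dist_comm x y]
  rw [div_le_iff₀ hD] at hsw
  nlinarith

lemma IsDoublingWith.exists_measure_ball_le {X : Type*} [MetricSpace X] [MeasurableSpace X]
    {μ : Measure X} {C : NNReal} (hμ : IsDoublingWith μ C) (hC : 1 ≤ C) (K : ℝ) :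
    ∃ A : NNReal, 1 ≤ A ∧ ∀ (y : X) (s t : ℝ), 0 < t → s ≤ K * t →
      μ (ball y s) ≤ A * μ (ball y t) := by
  have pow_doubling : ∀ (m : ℕ) (y : X) (t : ℝ), 0 < t →
      μ (ball y (2 ^ m * t)) ≤ (C : ENNReal) ^ m * μ (ball y t) := by
    intro m
    induction m with
    | zero => simp
    | succ m ih =>
      intro y t ht
      calc μ (ball y (2 ^ (m + 1) * t))
          = μ (ball y (2 * (2 ^ m * t))) := by rw [pow_succ, mul_comm _ (2 : ℝ), mul_assoc]
        _ ≤ C * μ (ball y (2 ^ m * t)) := (hμ y _ (by positivity)).2.1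
        _ ≤ C * (C ^ m * μ (ball y t)) := mul_le_mul_right (ih y t ht) _
        _ = C ^ (m + 1) * μ (ball y t) := by ring
  obtain ⟨m, hm⟩ := pow_unbounded_of_one_lt K one_lt_two
  refine ⟨C ^ m, one_le_pow₀ hC, fun y s t ht hs => ?_⟩
  calc μ (ball y s) ≤ μ (ball y (2 ^ m * t)) := measure_mono (ball_subset_ball (by nlinarith))
    _ ≤ (C : ENNReal) ^ m * μ (ball y t) := pow_doubling m y t ht
    _ = ((C ^ m : NNReal) : ENNReal) * μ (ball y t) := by push_cast; rfl

namespace RegularStructure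

variable {X : Type*} [MetricSpace X] [MeasurableSpace X] {α : ℕ → ℝ}
  (S : RegularStructure X α) {n i j : ℕ}

lemma ctr_mem (hi : i ∈ S.idx n) : S.ctr n i ∈ S.Q n i :=
  S.ball_subset n i hi (mem_ball_self (S.rad_pos n i hi))

lemma dist_ctr_lt (hi : i ∈ S.idx n) {y : X} (hy : y ∈ S.Q n i) :
    dist y (S.ctr n i) < S.C₁ * S.rad n i :=
  S.subset_ball n i hi hy

lemma dist_lt_of_mem (hi : i ∈ S.idx n) {y y' : X} (hy : y ∈ S.Q n i) (hy' : y' ∈ S.Q n i) :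
    dist y y' < 2 * S.C₁ * S.rad n i := by
  linarith [dist_triangle_right y y' (S.ctr n i), S.dist_ctr_lt hi hy, S.dist_ctr_lt hi hy']

lemma rad_le_of_dist_lt (hi : i ∈ S.idx n) (hj : j ∈ S.idx n) {T : ℝ} (hT : 0 < T)
    {p q : X} (hp : p ∈ S.Q n i) (hq : q ∈ S.Q n j) (hpq : dist p q < T * S.rad n i) :
    S.rad n i ≤ S.C₃ (S.C₁ + T) * S.rad n j := by
  have hT' : 1 < S.C₁ + T := by linarith [S.one_le_C₁]
  have hqi : q ∈ ball (S.ctr n i) ((S.C₁ + T) * S.rad n i) := by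
    rw [mem_ball]
    linarith [dist_triangle_left q (S.ctr n i) p, S.dist_ctr_lt hi hp]
  have h := (S.comparable _ hT' n j hj i hi ⟨q, hq, hqi⟩).1
  have hC₃ : 0 < S.C₃ (S.C₁ + T) := by linarith [S.one_le_C₃ _ hT']
  rwa [one_div, inv_mul_le_iff₀ hC₃] at h

lemma rad_le_of_inter_ball_two_mul (hi : i ∈ S.idx n) (hj : j ∈ S.idx n) {x : X} {r : ℝ}
    (hQj : S.Q n j ⊆ ball x r) (hmeet : (S.Q n i ∩ ball x (2 * r)).Nonempty) :
    S.rad n i ≤ r + S.C₃ (S.C₁ + 3) * S.rad n j := by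
  have hC₃ : 0 ≤ S.C₃ (S.C₁ + 3) * S.rad n j :=
    mul_nonneg (by linarith [S.one_le_C₃ (S.C₁ + 3) (by linarith [S.one_le_C₁])])
      (S.rad_pos n j hj).le
  by_cases hsmall : S.rad n i ≤ r
  · linarith
  obtain ⟨p, hp, hpx⟩ := hmeet
  have hjx : dist x (S.ctr n j) < r := by rw [dist_comm]; exact hQj (S.ctr_mem hj)
  have hpj : dist p (S.ctr n j) < 3 * S.rad n i := by
    linarith [dist_triangle p x (S.ctr n j), mem_ball.mp hpx]
  linarith [S.rad_le_of_dist_lt hi hj three_pos hp (S.ctr_mem hj) hpj, dist_nonneg.trans_lt hjx]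

lemma COVset_subset_ball {x : X} {R ρ : ℝ}
    (hρ : ∀ i ∈ S.idx n, (S.Q n i ∩ ball x R).Nonempty → S.rad n i ≤ ρ) :
    S.COVset x R n ⊆ ball x (R + 2 * S.C₁ * ρ) := by
  rintro y ⟨i, hi, ⟨p, hp, hpx⟩, hy⟩
  have hrad := hρ i hi ⟨p, hp, hpx⟩
  rw [mem_ball]
  nlinarith [dist_triangle y p x, S.dist_lt_of_mem hi hy hp, mem_ball.mp hpx, S.one_le_C₁]

lemma ball_subset_INset {x : X} {r s : ℝ}
    (h : ∀ i ∈ S.idx n, (S.Q n i ∩ ball x s).Nonempty → S.Q n i ⊆ ball x r) :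
    ball x s ⊆ S.INset x r n := fun y hy =>
  let ⟨i, hi, hyi⟩ := S.cover n y
  ⟨i, hi, h i hi ⟨y, hyi, hy⟩, hyi⟩

lemma lt_rad_of_not_subset_ball (hi : i ∈ S.idx n) (hj : j ∈ S.idx n) {x : X} {r : ℝ}
    (hQj : S.Q n j ⊆ ball x r) (hmeet : (S.Q n i ∩ ball x (r / 2)).Nonempty)
    (hout : ¬ S.Q n i ⊆ ball x r) :
    r < 4 * S.C₁ * S.C₃ (7 * S.C₁) * S.rad n j := by
  obtain ⟨p, hp, hpx⟩ := hmeet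
  obtain ⟨y, hy, hyx⟩ := not_subset.mp hout
  have hri : r < 4 * S.C₁ * S.rad n i := by
    linarith [dist_triangle y p x, S.dist_lt_of_mem hi hy hp, mem_ball.mp hpx,
      not_lt.mp (mt mem_ball.mpr hyx)]
  have hjx : dist x (S.ctr n j) < r := by rw [dist_comm]; exact hQj (S.ctr_mem hj)
  have hpj : dist p (S.ctr n j) < 6 * S.C₁ * S.rad n i := by
    linarith [dist_triangle p x (S.ctr n j), mem_ball.mp hpx]
  have hT : (0 : ℝ) < 6 * S.C₁ := by linarith [S.one_le_C₁]
  have h := S.rad_le_of_dist_lt hi hj hT hp (S.ctr_mem hj) hpj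
  rw [show S.C₁ + 6 * S.C₁ = 7 * S.C₁ by ring] at h
  nlinarith [S.one_le_C₁]

variable {μ : Measure X} {C : NNReal}

lemma exists_measure_COVset_le {D : ℝ} (hperf : UniformlyPerfectWith X D) (hD : 0 < D)
    (hμ : IsDoublingWith μ C) (hC : 1 ≤ C) :
    ∃ A : NNReal, 1 ≤ A ∧ ∀ (x : X) (r : ℝ) (n : ℕ), 0 < r → (S.INset x r n).Nonempty →
      μ (S.COVset x (2 * r) n) ≤ A * μ (ball x r) := by
  set κ := S.C₃ (S.C₁ + 3)
  have hκ : 0 ≤ κ := zero_le_one.trans (S.one_le_C₃ _ (by linarith [S.one_le_C₁]))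
  obtain ⟨A, hA, hball⟩ := hμ.exists_measure_ball_le hC (2 + 2 * S.C₁ * (1 + κ * (2 * D)))
  refine ⟨A, hA, fun x r n hr ⟨_, j, hj, hQj, _⟩ => ?_⟩
  rcases (ball x r)ᶜ.eq_empty_or_nonempty with hfull | hne
  · calc μ (S.COVset x (2 * r) n) ≤ μ (ball x r) := by
          rw [compl_empty_iff.mp hfull]; exact measure_mono (subset_univ _)
      _ ≤ A * μ (ball x r) := le_mul_of_one_le_left' (by exact_mod_cast hA)
  have hrj : S.rad n j ≤ 2 * D * r := hperf.radius_le_of_ball_subset hD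
    (S.rad_pos n j hj) ((S.ball_subset n j hj).trans hQj) hne
  have hCOV : S.COVset x (2 * r) n ⊆ ball x (2 * r + 2 * S.C₁ * (r + κ * (2 * D * r))) :=
    S.COVset_subset_ball fun i hi hmeet =>
      (S.rad_le_of_inter_ball_two_mul hi hj hQj hmeet).trans (by gcongr)
  exact (measure_mono hCOV).trans (hball x _ r hr (le_of_eq (by ring)))

lemma exists_measure_ball_le_INset (hμ : IsDoublingWith μ C) (hC : 1 ≤ C) :
    ∃ A : NNReal, 1 ≤ A ∧ ∀ (x : X) (r : ℝ) (n : ℕ), 0 < r → (S.INset x r n).Nonempty →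
      μ (ball x r) ≤ A * μ (S.INset x r n) := by
  set κ := S.C₃ (7 * S.C₁)
  have hκ : 1 ≤ κ := S.one_le_C₃ _ (by linarith [S.one_le_C₁])
  have hK : 2 ≤ 8 * S.C₁ * κ := by nlinarith [S.one_le_C₁]
  obtain ⟨A, hA, hball⟩ := hμ.exists_measure_ball_le hC (8 * S.C₁ * κ)
  refine ⟨A, hA, fun x r n hr ⟨_, j, hj, hQj, _⟩ => ?_⟩
  by_cases hsmall : ∀ i ∈ S.idx n, (S.Q n i ∩ ball x (r / 2)).Nonempty → S.Q n i ⊆ ball x r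
  · calc μ (ball x r) ≤ A * μ (ball x (r / 2)) :=
          hball x r (r / 2) (by positivity) (by nlinarith)
      _ ≤ A * μ (S.INset x r n) := by gcongr; exact S.ball_subset_INset hsmall
  push Not at hsmall
  obtain ⟨i, hi, hmeet, hout⟩ := hsmall
  have hrj := S.lt_rad_of_not_subset_ball hi hj hQj hmeet hout
  have hxj : ball x r ⊆ ball (S.ctr n j) (2 * r) :=
    ball_subset_ball' (by linarith [mem_ball.mp (hQj (S.ctr_mem hj)), dist_comm x (S.ctr n j)])
  calc μ (ball x r) ≤ μ (ball (S.ctr n j) (2 * r)) := measure_mono hxj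
    _ ≤ A * μ (ball (S.ctr n j) (S.rad n j)) := hball _ _ _ (S.rad_pos n j hj) (by linarith)
    _ ≤ A * μ (S.INset x r n) := by
        gcongr
        exact fun y hy => ⟨j, hj, hQj, S.ball_subset n j hj hy⟩

end RegularStructure

theorem doubling_measure_ball_cube_comparison_general {X : Type*} [MetricSpace X]
    [MeasurableSpace X]
    (hup : UniformlyPerfect X)
    (α : ℕ → ℝ)
    (S : RegularStructure X α)
    (μ : Measure X) (hμ : IsDoublingMeasure μ) :
    ∃ Cμ : NNReal, 1 ≤ Cμ ∧
      ∀ (x : X) (r : ℝ) (n : ℕ), 0 < r → (S.INset x r n).Nonempty →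
        μ (S.COVset x (2 * r) n) ≤ (Cμ : ENNReal) * μ (ball x r) ∧
        μ (ball x r) ≤ (Cμ : ENNReal) * μ (S.INset x r n) := by
  obtain ⟨C, hC, hμC⟩ := hμ
  obtain ⟨-, D, hD, hperf⟩ := hup
  obtain ⟨A₁, hA₁, hCOV⟩ := S.exists_measure_COVset_le hperf (by linarith) hμC hC
  obtain ⟨A₂, -, hIN⟩ := S.exists_measure_ball_le_INset hμC hC
  refine ⟨max A₁ A₂, le_max_of_le_left hA₁, fun x r n hr hne => ⟨?_, ?_⟩⟩
  · exact (hCOV x r n hr hne).trans (by gcongr; exact_mod_cast le_max_left A₁ A₂)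
  · exact (hIN x r n hr hne).trans (by gcongr; exact_mod_cast le_max_right A₁ A₂)

/-- measures of balls are comparable with measures of `IN` and `COV`
for a doubling measure (Corollary 4.3 of the paper). -/
theorem doubling_measure_ball_cube_comparison {X : Type*} [MetricSpace X]
    [MeasurableSpace X] [BorelSpace X]
    (hup : UniformlyPerfect X)
    (α : ℕ → ℝ) (hα : ∀ n, 0 < α n ∧ α n < 1)
    (S : RegularStructure X α)
    (μ : Measure X) (hμ : IsDoublingMeasure μ) :
    ∃ Cμ : NNReal, 1 ≤ Cμ ∧
      ∀ (x : X) (r : ℝ) (n : ℕ), 0 < r → (S.INset x r n).Nonempty →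
        μ (S.COVset x (2 * r) n) ≤ (Cμ : ENNReal) * μ (ball x r) ∧
        μ (ball x r) ≤ (Cμ : ENNReal) * μ (S.INset x r n) :=
  doubling_measure_ball_cube_comparison_general hup α S μ hμ
end

section
/- Let (X,d,H) be an Ahlfors q-regular metric measure space with constant C, let x₀ ∈ X and let ρ > −q. Define the measure μ_ρ by μ_ρ(A) := ∫_A d(x₀,y)^ρ dH(y) for Borel sets A. Then μ_ρ is a doubling measure on X, with doubling constant depending only on C, q and ρ (in particular independent of x₀). -/
open MeasureTheory Metric Set Filter

/-!
Write `D = d(x₀, x)`. Far from `x₀` (`4r ≤ D`) the weight `d(x₀, ·)^ρ` is comparable to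
`D^ρ` on `B(x, 2r)`, so doubling of `μ_ρ` there is doubling of `H`. Near `x₀` both balls
have `μ_ρ`-measure comparable to `r^(q+ρ)`: from above by summing over the dyadic annuli
around `x₀`, a geometric series because `q + ρ > 0`; from below because `B(x, r)` minus a
small ball around `x₀` still carries a fixed proportion of `H(B(x, r))`, and there the
weight is `≈ r^ρ`.
-/

open ENNReal Topology

lemma Real.rpow_le_rpow_abs_mul_rpow {s t k ρ : ℝ} (hs : 0 < s) (ht : 0 < t)
    (hst : s ≤ k * t) (hts : t ≤ k * s) : s ^ ρ ≤ k ^ |ρ| * t ^ ρ := by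
  have hk : 0 < k := pos_of_mul_pos_left (hs.trans_le hst) ht.le
  rcases le_or_gt 0 ρ with hρ | hρ
  · rw [abs_of_nonneg hρ, ← Real.mul_rpow hk.le ht.le]
    exact Real.rpow_le_rpow hs.le hst hρ
  · have hts' : t / k ≤ s := by rwa [div_le_iff₀ hk, mul_comm]
    calc s ^ ρ ≤ (t / k) ^ ρ := Real.rpow_le_rpow_of_nonpos (by positivity) hts' hρ.le
      _ = k ^ |ρ| * t ^ ρ := by
        rw [abs_of_neg hρ, Real.div_rpow ht.le hk.le, Real.rpow_neg hk.le]
        ring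

section WithDensity

variable {α : Type*} [MeasurableSpace α] {μ : Measure α} {f : α → ℝ≥0∞} {s : Set α}
  {c : ℝ≥0∞}

lemma withDensity_apply_le_mul (hs : MeasurableSet s) (hf : ∀ y ∈ s, f y ≤ c) :
    μ.withDensity f s ≤ c * μ s := by
  rw [withDensity_apply _ hs, ← setLIntegral_const]
  exact setLIntegral_mono' hs hf

lemma mul_le_withDensity_apply (hs : MeasurableSet s) (hf : ∀ y ∈ s, c ≤ f y) :
    c * μ s ≤ μ.withDensity f s := by
  rw [withDensity_apply _ hs, ← setLIntegral_const]
  exact setLIntegral_mono' hs hf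

end WithDensity

lemma Metric.ball_diff_singleton_subset_iUnion_annulus {X : Type*} [MetricSpace X] (x : X)
    (R : ℝ) : ball x R \ {x} ⊆ ⋃ k : ℕ, ball x (R / 2 ^ k) \ ball x (R / 2 ^ (k + 1)) := by
  rintro y ⟨hy, hyx⟩
  have hd : 0 < dist y x := dist_pos.2 hyx
  have hR : 0 < R := hd.trans (mem_ball.1 hy)
  obtain ⟨n, hn⟩ := exists_pow_lt_of_lt_one (div_pos hd hR) one_half_lt_one
  have hn : y ∉ ball x (R / 2 ^ n) := by
    rw [lt_div_iff₀ hR, one_div_pow, one_div_mul_eq_div] at hn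
    exact fun h => (mem_ball.1 h).not_gt hn
  obtain ⟨k, hk, hk1⟩ := Nat.exists_not_and_succ_of_not_zero_of_exists
    (p := fun n => y ∉ ball x (R / 2 ^ n)) (by simpa using hy) ⟨n, hn⟩
  exact mem_iUnion.2 ⟨k, not_not.1 hk, hk1⟩

lemma Metric.dist_le_two_mul_of_mem_ball_of_four_mul_le {X : Type*} [PseudoMetricSpace X]
    {x₀ x y : X} {r : ℝ} (hfar : 4 * r ≤ dist x₀ x) (hy : y ∈ ball x (2 * r)) :
    dist x₀ y ≤ 2 * dist x₀ x ∧ dist x₀ x ≤ 2 * dist x₀ y := by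
  rw [mem_ball] at hy
  have h₁ := dist_triangle x₀ x y
  have h₂ := dist_triangle x₀ y x
  rw [dist_comm x y] at h₁
  constructor <;> linarith

namespace AhlforsRegular

variable {X : Type*} [MetricSpace X] [MeasurableSpace X] {H : Measure X} {q C : ℝ}

lemma measure_singleton (hH : AhlforsRegular H q C) (hq : 0 < q) (x : X) : H {x} = 0 := by
  have hlim : Tendsto (fun r : ℝ => ENNReal.ofReal (C * r ^ q)) (𝓝[>] 0) (𝓝 0) := by
    have : Tendsto (fun r : ℝ => C * r ^ q) (𝓝[>] 0) (𝓝 (C * 0 ^ q)) :=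
      ((Real.continuousAt_rpow_const 0 q (Or.inr hq.le)).tendsto.const_mul C).mono_left
        nhdsWithin_le_nhds
    simpa [Real.zero_rpow hq.ne'] using ENNReal.tendsto_ofReal this
  refine le_antisymm (ge_of_tendsto hlim ?_) zero_le
  filter_upwards [self_mem_nhdsWithin] with r hr
  exact (measure_mono (singleton_subset_iff.2 (mem_ball_self hr))).trans (hH x r hr).2

lemma exists_measure_ball_diff_ball_ge (hH : AhlforsRegular H q C) (hC : 0 < C) (hq : 0 < q) :
    ∃ ε > 0, ∀ (x y : X) (r : ℝ), 0 < r →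
      ENNReal.ofReal (r ^ q / (2 * C)) ≤ H (ball x r \ ball y (ε * r)) := by
  set ε : ℝ := (2 * C ^ 2) ^ (-q⁻¹)
  have hε : 0 < ε := by positivity
  refine ⟨ε, hε, fun x y r hr => ?_⟩
  have hsmall : C * (ε * r) ^ q = r ^ q / (2 * C) := by
    rw [Real.mul_rpow hε.le hr.le, ← Real.rpow_mul (by positivity), neg_mul,
      inv_mul_cancel₀ hq.ne', Real.rpow_neg_one]
    field_simp
  calc ENNReal.ofReal (r ^ q / (2 * C))
      = ENNReal.ofReal (r ^ q / C) - ENNReal.ofReal (r ^ q / (2 * C)) := by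
        rw [← ENNReal.ofReal_sub _ (by positivity)]
        congr 1
        field_simp
        ring
    _ ≤ H (ball x r) - H (ball y (ε * r)) := by
        gcongr
        · exact (hH x r hr).1
        · exact hsmall ▸ (hH y (ε * r) (by positivity)).2
    _ ≤ H (ball x r \ ball y (ε * r)) := le_measure_sdiff

end AhlforsRegular

noncomputable def radialMeasure {X : Type*} [MetricSpace X] [MeasurableSpace X] (H : Measure X)
    (x₀ : X) (ρ : ℝ) : Measure X :=
  H.withDensity fun y => ENNReal.ofReal (dist x₀ y ^ ρ)

section RadialMeasure

variable {X : Type*} [MetricSpace X] [MeasurableSpace X] [BorelSpace X] {H : Measure X}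
  {q C ρ : ℝ}

lemma radialMeasure_ball_pos (hH : AhlforsRegular H q C) (hC : 0 < C) (hq : 0 < q) (x₀ x : X)
    {r : ℝ} (hr : 0 < r) : 0 < radialMeasure H x₀ ρ (ball x r) := by
  have hweight : ball x r \ {x₀} ⊆ {y | ENNReal.ofReal (dist x₀ y ^ ρ) ≠ 0} ∩ ball x r :=
    fun y ⟨hy, hyx₀⟩ => ⟨(ENNReal.ofReal_pos.2 (Real.rpow_pos_of_pos
      (dist_pos.2 (Ne.symm hyx₀)) ρ)).ne', hy⟩
  have hH0 : 0 < H (ball x r \ {x₀}) := by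
    rw [measure_sdiff_null (hH.measure_singleton hq x₀)]
    exact (ENNReal.ofReal_pos.2 (by positivity)).trans_le (hH x r hr).1
  refine pos_iff_ne_zero.2 fun h => (hH0.trans_le (measure_mono hweight)).ne' ?_
  rwa [radialMeasure, withDensity_apply_eq_zero' (by fun_prop)] at h

lemma radialMeasure_annulus_le (hH : AhlforsRegular H q C) (x₀ : X) {s : ℝ} (hs : 0 < s) :
    radialMeasure H x₀ ρ (ball x₀ s \ ball x₀ (s / 2))
      ≤ ENNReal.ofReal (2 ^ |ρ| * C * s ^ (q + ρ)) := by
  have hweight : ∀ y ∈ ball x₀ s \ ball x₀ (s / 2),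
      dist x₀ y ^ ρ ≤ 2 ^ |ρ| * s ^ ρ := by
    rintro y ⟨hy, hy'⟩
    rw [mem_ball', not_lt] at *
    exact Real.rpow_le_rpow_abs_mul_rpow (by linarith) hs (by linarith) (by linarith)
  calc radialMeasure H x₀ ρ (ball x₀ s \ ball x₀ (s / 2))
      ≤ ENNReal.ofReal (2 ^ |ρ| * s ^ ρ) * H (ball x₀ s \ ball x₀ (s / 2)) :=
        withDensity_apply_le_mul (measurableSet_ball.diff measurableSet_ball)
          fun y hy => ENNReal.ofReal_le_ofReal (hweight y hy)
    _ ≤ ENNReal.ofReal (2 ^ |ρ| * s ^ ρ) * ENNReal.ofReal (C * s ^ q) := by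
        gcongr
        exact (measure_mono sdiff_subset).trans (hH x₀ s hs).2
    _ = ENNReal.ofReal (2 ^ |ρ| * C * s ^ (q + ρ)) := by
        rw [← ENNReal.ofReal_mul (by positivity), Real.rpow_add hs]
        ring_nf

lemma exists_radialMeasure_ball_center_le (hH : AhlforsRegular H q C) (hq : 0 < q)
    (hρ : -q < ρ) : ∃ K : ℝ, ∀ (x₀ : X) (R : ℝ), 0 < R →
      radialMeasure H x₀ ρ (ball x₀ R) ≤ ENNReal.ofReal (K * R ^ (q + ρ)) := by
  set t : ℝ := (2 ^ (q + ρ))⁻¹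
  have ht : t < 1 := inv_lt_one_of_one_lt₀ (Real.one_lt_rpow one_lt_two (by linarith))
  have ht0 : 0 < t := by positivity
  refine ⟨2 ^ |ρ| * C * (1 - t)⁻¹, fun x₀ R hR => ?_⟩
  set A : ℕ → Set X := fun k => ball x₀ (R / 2 ^ k) \ ball x₀ (R / 2 ^ (k + 1))
  have hannulus : ∀ k : ℕ, radialMeasure H x₀ ρ (A k)
      ≤ ENNReal.ofReal (2 ^ |ρ| * C * R ^ (q + ρ)) * ENNReal.ofReal t ^ k := by
    intro k
    have hscale : (R / 2 ^ k) ^ (q + ρ) = R ^ (q + ρ) * t ^ k := by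
      rw [Real.div_rpow hR.le (by positivity), ← Real.rpow_natCast_mul zero_le_two,
        mul_comm, Real.rpow_mul_natCast zero_le_two, inv_pow, div_eq_mul_inv]
    calc radialMeasure H x₀ ρ (A k)
        = radialMeasure H x₀ ρ (ball x₀ (R / 2 ^ k) \ ball x₀ (R / 2 ^ k / 2)) := by
          simp only [A, pow_succ, div_div]
      _ ≤ ENNReal.ofReal (2 ^ |ρ| * C * (R / 2 ^ k) ^ (q + ρ)) :=
          radialMeasure_annulus_le hH x₀ (by positivity)
      _ = ENNReal.ofReal (2 ^ |ρ| * C * R ^ (q + ρ)) * ENNReal.ofReal t ^ k := by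
          rw [hscale, ← ENNReal.ofReal_pow ht0.le, ← ENNReal.ofReal_mul' (by positivity)]
          ring_nf
  calc radialMeasure H x₀ ρ (ball x₀ R) = radialMeasure H x₀ ρ (ball x₀ R \ {x₀}) :=
        (measure_sdiff_null (withDensity_absolutelyContinuous _ _
          (hH.measure_singleton hq x₀))).symm
    _ ≤ ∑' k : ℕ, radialMeasure H x₀ ρ (A k) :=
        (measure_mono (ball_diff_singleton_subset_iUnion_annulus x₀ R)).trans
          (measure_iUnion_le _)
    _ ≤ ∑' k : ℕ, ENNReal.ofReal (2 ^ |ρ| * C * R ^ (q + ρ)) * ENNReal.ofReal t ^ k :=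
        ENNReal.tsum_le_tsum hannulus
    _ = ENNReal.ofReal (2 ^ |ρ| * C * (1 - t)⁻¹ * R ^ (q + ρ)) := by
        rw [ENNReal.tsum_mul_left, ENNReal.tsum_geometric, ← ENNReal.ofReal_one,
          ← ENNReal.ofReal_sub _ ht0.le, ← ENNReal.ofReal_inv_of_pos (by linarith),
          ← ENNReal.ofReal_mul' (by simp only [inv_nonneg]; linarith)]
        congr 1
        ring

lemma radialMeasure_ball_lt_top (hH : AhlforsRegular H q C) (hq : 0 < q) (hρ : -q < ρ)
    (x₀ x : X) {r : ℝ} (hr : 0 < r) : radialMeasure H x₀ ρ (ball x r) < ⊤ := by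
  obtain ⟨K, hK⟩ := exists_radialMeasure_ball_center_le hH hq hρ
  calc radialMeasure H x₀ ρ (ball x r)
      ≤ radialMeasure H x₀ ρ (ball x₀ (dist x₀ x + r)) :=
        measure_mono (ball_subset_ball' (by rw [dist_comm]; linarith))
    _ < ⊤ := (hK x₀ _ (by positivity)).trans_lt ofReal_lt_top

lemma exists_le_radialMeasure_ball_of_near (hH : AhlforsRegular H q C) (hC : 0 < C)
    (hq : 0 < q) : ∃ c > 0, ∀ (x₀ x : X) (r : ℝ), 0 < r → dist x₀ x < 4 * r →
      ENNReal.ofReal (c * r ^ (q + ρ)) ≤ radialMeasure H x₀ ρ (ball x r) := by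
  obtain ⟨ε, hε, hHε⟩ := hH.exists_measure_ball_diff_ball_ge hC hq
  set k : ℝ := 5 + ε⁻¹
  refine ⟨(k ^ |ρ| * (2 * C))⁻¹, by positivity, fun x₀ x r hr hnear => ?_⟩
  have hweight : ∀ y ∈ ball x r \ ball x₀ (ε * r),
      r ^ ρ / k ^ |ρ| ≤ dist x₀ y ^ ρ := by
    rintro y ⟨hy, hy'⟩
    rw [mem_ball, not_lt, dist_comm y] at *
    have hd : 0 < dist x₀ y := (by positivity : 0 < ε * r).trans_le hy'
    have hfar : r ≤ k * dist x₀ y := calc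
      r ≤ ε⁻¹ * dist x₀ y := by rwa [← div_eq_inv_mul, le_div_iff₀' hε]
      _ ≤ k * dist x₀ y := by gcongr; exact le_add_of_nonneg_left (by norm_num)
    have hclose : dist x₀ y ≤ k * r := calc
      dist x₀ y ≤ dist x₀ x + dist x y := dist_triangle _ _ _
      _ ≤ 5 * r := by linarith
      _ ≤ k * r := by gcongr; exact le_add_of_nonneg_right (inv_nonneg.2 hε.le)
    rw [div_le_iff₀' (by positivity)]
    exact Real.rpow_le_rpow_abs_mul_rpow hr hd hfar hclose
  calc ENNReal.ofReal ((k ^ |ρ| * (2 * C))⁻¹ * r ^ (q + ρ))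
      = ENNReal.ofReal (r ^ ρ / k ^ |ρ|) * ENNReal.ofReal (r ^ q / (2 * C)) := by
        rw [← ENNReal.ofReal_mul (by positivity), Real.rpow_add hr]
        congr 1
        field_simp
    _ ≤ ENNReal.ofReal (r ^ ρ / k ^ |ρ|) * H (ball x r \ ball x₀ (ε * r)) := by
        gcongr
        exact hHε x x₀ r hr
    _ ≤ radialMeasure H x₀ ρ (ball x r \ ball x₀ (ε * r)) :=
        mul_le_withDensity_apply (measurableSet_ball.diff measurableSet_ball)
          fun y hy => ENNReal.ofReal_le_ofReal (hweight y hy)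
    _ ≤ radialMeasure H x₀ ρ (ball x r) := measure_mono sdiff_subset

lemma exists_radialMeasure_ball_two_mul_le_of_near (hH : AhlforsRegular H q C) (hC : 0 < C)
    (hq : 0 < q) (hρ : -q < ρ) :
    ∃ c : ℝ, ∀ (x₀ x : X) (r : ℝ), 0 < r → dist x₀ x < 4 * r →
      radialMeasure H x₀ ρ (ball x (2 * r))
        ≤ ENNReal.ofReal c * radialMeasure H x₀ ρ (ball x r) := by
  obtain ⟨K, hK⟩ := exists_radialMeasure_ball_center_le hH hq hρ
  obtain ⟨c, hc, hlower⟩ := exists_le_radialMeasure_ball_of_near (ρ := ρ) hH hC hq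
  refine ⟨K * 6 ^ (q + ρ) / c, fun x₀ x r hr hnear => ?_⟩
  calc radialMeasure H x₀ ρ (ball x (2 * r)) ≤ radialMeasure H x₀ ρ (ball x₀ (6 * r)) :=
        measure_mono (ball_subset_ball' (by rw [dist_comm]; linarith))
    _ ≤ ENNReal.ofReal (K * (6 * r) ^ (q + ρ)) := hK x₀ _ (by positivity)
    _ = ENNReal.ofReal (K * 6 ^ (q + ρ) / c) * ENNReal.ofReal (c * r ^ (q + ρ)) := by
        rw [← ENNReal.ofReal_mul' (by positivity), Real.mul_rpow (by norm_num) hr.le]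
        congr 1
        field_simp
    _ ≤ ENNReal.ofReal (K * 6 ^ (q + ρ) / c) * radialMeasure H x₀ ρ (ball x r) := by
        gcongr
        exact hlower x₀ x r hr hnear

lemma exists_radialMeasure_ball_two_mul_le_of_far (hH : AhlforsRegular H q C) (hC : 0 < C) :
    ∃ c : ℝ, ∀ (x₀ x : X) (r : ℝ), 0 < r → 4 * r ≤ dist x₀ x →
      radialMeasure H x₀ ρ (ball x (2 * r))
        ≤ ENNReal.ofReal c * radialMeasure H x₀ ρ (ball x r) := by
  refine ⟨(2 ^ |ρ|) ^ 2 * C ^ 2 * 2 ^ q, fun x₀ x r hr hfar => ?_⟩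
  set D := dist x₀ x
  have hD : 0 < D := by linarith
  have hpos : ∀ y ∈ ball x (2 * r), 0 < dist x₀ y := fun y hy => by
    linarith [(Metric.dist_le_two_mul_of_mem_ball_of_four_mul_le hfar hy).2]
  have hupper : ∀ y ∈ ball x (2 * r), dist x₀ y ^ ρ ≤ 2 ^ |ρ| * D ^ ρ := fun y hy =>
    have h := Metric.dist_le_two_mul_of_mem_ball_of_four_mul_le hfar hy
    Real.rpow_le_rpow_abs_mul_rpow (hpos y hy) hD h.1 h.2
  have hlower : ∀ y ∈ ball x r, D ^ ρ / 2 ^ |ρ| ≤ dist x₀ y ^ ρ := fun y hy => by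
    have hy₂ : y ∈ ball x (2 * r) := ball_subset_ball (by linarith) hy
    have h := Metric.dist_le_two_mul_of_mem_ball_of_four_mul_le hfar hy₂
    rw [div_le_iff₀' (by positivity)]
    exact Real.rpow_le_rpow_abs_mul_rpow hD (hpos y hy₂) h.2 h.1
  calc radialMeasure H x₀ ρ (ball x (2 * r))
      ≤ ENNReal.ofReal (2 ^ |ρ| * D ^ ρ) * H (ball x (2 * r)) :=
        withDensity_apply_le_mul measurableSet_ball fun y hy =>
          ENNReal.ofReal_le_ofReal (hupper y hy)
    _ ≤ ENNReal.ofReal (2 ^ |ρ| * D ^ ρ) * ENNReal.ofReal (C * (2 * r) ^ q) := by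
        gcongr
        exact (hH x _ (by positivity)).2
    _ = ENNReal.ofReal ((2 ^ |ρ|) ^ 2 * C ^ 2 * 2 ^ q)
          * (ENNReal.ofReal (D ^ ρ / 2 ^ |ρ|) * ENNReal.ofReal (r ^ q / C)) := by
        rw [← ENNReal.ofReal_mul (by positivity), ← ENNReal.ofReal_mul (by positivity),
          ← ENNReal.ofReal_mul (by positivity), Real.mul_rpow (by norm_num) hr.le]
        congr 1
        field_simp
    _ ≤ ENNReal.ofReal ((2 ^ |ρ|) ^ 2 * C ^ 2 * 2 ^ q)
          * (ENNReal.ofReal (D ^ ρ / 2 ^ |ρ|) * H (ball x r)) := by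
        gcongr
        exact (hH x r hr).1
    _ ≤ ENNReal.ofReal ((2 ^ |ρ|) ^ 2 * C ^ 2 * 2 ^ q) * radialMeasure H x₀ ρ (ball x r) := by
        gcongr
        exact mul_le_withDensity_apply measurableSet_ball fun y hy =>
          ENNReal.ofReal_le_ofReal (hlower y hy)

lemma exists_radialMeasure_ball_two_mul_le (hH : AhlforsRegular H q C) (hC : 0 < C)
    (hq : 0 < q) (hρ : -q < ρ) : ∃ c : ℝ, ∀ (x₀ x : X) (r : ℝ), 0 < r →
      radialMeasure H x₀ ρ (ball x (2 * r))
        ≤ ENNReal.ofReal c * radialMeasure H x₀ ρ (ball x r) := by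
  obtain ⟨c₁, hnear⟩ := exists_radialMeasure_ball_two_mul_le_of_near hH hC hq hρ
  obtain ⟨c₂, hfar⟩ := exists_radialMeasure_ball_two_mul_le_of_far (ρ := ρ) hH hC
  refine ⟨max c₁ c₂, fun x₀ x r hr => ?_⟩
  rcases lt_or_ge (dist x₀ x) (4 * r) with h | h
  · exact (hnear x₀ x r hr h).trans (by gcongr; exact le_max_left _ _)
  · exact (hfar x₀ x r hr h).trans (by gcongr; exact le_max_right _ _)

end RadialMeasure

/-- in an Ahlfors `q`-regular space, `d(x₀,·)^ρ dH` is doubling for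
`ρ > -q`, with constant independent of `x₀`. -/
theorem radial_weight_doubling {X : Type*} [MetricSpace X] [MeasurableSpace X]
    [BorelSpace X]
    (H : Measure X) (q C : ℝ) (hC : 1 ≤ C) (hq : 0 < q)
    (hH : AhlforsRegular H q C) (ρ : ℝ) (hρ : -q < ρ) :
    ∃ C' : NNReal, 1 ≤ C' ∧ ∀ x₀ : X,
      IsDoublingWith (H.withDensity fun y => ENNReal.ofReal (dist x₀ y ^ ρ)) C' := by
  have hC₀ : 0 < C := one_pos.trans_le hC
  obtain ⟨c, hc⟩ := exists_radialMeasure_ball_two_mul_le hH hC₀ hq hρ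
  refine ⟨max 1 c.toNNReal, le_max_left _ _, fun x₀ x r hr => ⟨?_, ?_, ?_⟩⟩
  · exact radialMeasure_ball_pos hH hC₀ hq x₀ x (by positivity)
  · refine (hc x₀ x r hr).trans (mul_le_mul_left ?_ _)
    rw [ENNReal.ofReal, ENNReal.coe_le_coe]
    exact le_max_right _ _
  · exact mul_lt_top coe_lt_top (radialMeasure_ball_lt_top hH hq hρ x₀ x hr)
end
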